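/- Suppose G and H are two 2-balanced graphs such that their intersection G ∩ H is a single edge (i.e., V(G) ∩ V(H) consists of exactly two vertices that are joined by an edge belonging to both G and H). If m₂(G) = m₂(H) = d, then the union G ∪ H is 2-balanced with m₂(G ∪ H) = d. -/

import Mathlib

open Filter Asymptotics
open scoped Classical ENNReal

noncomputable section

namespace OG

/-! ### Finite graphs, represented as subgraphs of a complete graph -/

abbrev Sub (W : Type*) := (⊤ : SimpleGraph W).Subgraph

variable {W U X : Type*}

/-- number of vertices -/
def nverts (G : Sub W) : ℕ := G.verts.ncard

/-- number of edges -/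
def nedges (G : Sub W) : ℕ := G.edgeSet.ncard

/-- the density `d(G) = e_G / v_G` -/
def dd (G : Sub W) : ℝ := (nedges G : ℝ) / (nverts G : ℝ)

/-- the `1`-density `d₁(G) = e_G / (v_G - 1)` -/
def d1 (G : Sub W) : ℝ := (nedges G : ℝ) / ((nverts G : ℝ) - 1)

/-- the `2`-density `d₂(G) = (e_G - 1)/(v_G - 2)` -/
def d2 (G : Sub W) : ℝ := ((nedges G : ℝ) - 1) / ((nverts G : ℝ) - 2)

/-- `m(G) = max_{H ⊆ G} d(H)` -/
def mD (G : Sub W) : ℝ := ⨆ H : {H : Sub W // H ≤ G}, dd H.1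

/-- `m₁(G) = max_{H ⊆ G} d₁(H)` -/
def m1D (G : Sub W) : ℝ := ⨆ H : {H : Sub W // H ≤ G}, d1 H.1

/-- `m₂(G) = max_{H ⊆ G} d₂(H)` (over subgraphs with at least one edge;
on edgeless subgraphs the convention `0/0 = 0` applies) -/
def m2D (G : Sub W) : ℝ := ⨆ H : {H : Sub W // H ≤ G ∧ 1 ≤ nedges H}, d2 H.1

/-- `G` is 2-balanced if `m₂(G) = d₂(G)`. -/
def TwoBalanced (G : Sub W) : Prop := m2D G = d2 G

/-- the recursively defined densities `m̄ʳ₂(G)`. -/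
def mbar (G : Sub W) : ℕ → ℝ
  | 0 => 0
  | 1 => mD G
  | k + 2 => ⨆ H : {H : Sub W // H ≤ G},
      (nedges H.1 : ℝ) / ((nverts H.1 : ℝ) - 2 + 1 / mbar G (k + 1))

/-- view a `SimpleGraph` on a vertex type `V` as a graph with vertex set all of `V`. -/
def toSub {V : Type*} (G : SimpleGraph V) : Sub V where
  verts := Set.univ
  Adj := G.Adj
  adj_sub := fun h => G.ne_of_adj h
  edge_vert := fun _ => Set.mem_univ _
  symm := G.symm

/-! ### Rooted graphs -/

/-- number of edges of `G` inside the root set `R`, i.e. `e_{G[R]}`. -/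
def rInEdges (R : Set W) (G : Sub W) : ℕ := {e ∈ G.edgeSet | ∀ x ∈ e, x ∈ R}.ncard

/-- the density `d(R,G) = ē_G / v̄_G` of a rooted graph (with the roots `R ∩ V(G)`). -/
def rdd (R : Set W) (G : Sub W) : ℝ :=
  ((nedges G : ℝ) - (rInEdges R G : ℝ)) / ((nverts G : ℝ) - ((G.verts ∩ R).ncard : ℝ))

/-- `m(R,G) = max_{H ⊆ G} d(R ∩ V(H), H)` -/
def mRooted (R : Set W) (G : Sub W) : ℝ := ⨆ H : {H : Sub W // H ≤ G}, rdd R H.1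

/-- a rooted graph is balanced if its density attains `m(R,G)`. -/
def BalancedRooted (R : Set W) (G : Sub W) : Prop := mRooted R G = rdd R G

/-- the rooted `2`-density `d₂(R,G,t)`, valued in `ℝ≥0∞`. -/
def d2t (R : Set W) (G : Sub W) (t : ℝ) : ℝ≥0∞ :=
  if 0 < (nverts G : ℝ) - 2 - t * (rInEdges R G : ℝ) then
    ENNReal.ofReal ((((nedges G : ℝ) - (rInEdges R G : ℝ)) - 1) /
      ((nverts G : ℝ) - 2 - t * (rInEdges R G : ℝ)))
  else ⊤

/-- `m₂(R,G,t)`, the maximum of `d₂(R ∩ V(H), H, t)` over subgraphs `H ⊆ G` with `ē_H > 1`. -/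
def m2t (R : Set W) (G : Sub W) (t : ℝ) : ℝ≥0∞ :=
  ⨆ H : {H : Sub W // H ≤ G ∧ rInEdges R H + 2 ≤ nedges H}, d2t R H.1 t


/-! ### Products of rooted graphs and the families 𝓕ᵏ -/

/-- `e` is a non-root edge of `Fg` w.r.t. the root set `R`. -/
def NRe (Fg : Sub W) (R : Set W) (e : Sym2 W) : Prop := e ∈ Fg.edgeSet ∧ ¬ ∀ x ∈ e, x ∈ R

/-- `P` (together with the placement maps `φ`, `ψ`) is a copy of the product `(R,Fg) × (h₁h₂, H)`:
it is obtained from `Fg` by attaching to every non-root edge of `Fg` a new copy of `H`,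
rooted at that edge (the edge itself being kept iff `h₁h₂ ∈ E(H)`). -/
def IsProdCopyData (Fg : Sub W) (R : Set W) (H : Sub U) (h₁ h₂ : U) (P : Sub X)
    (φ : W → X) (ψ : Sym2 W → U → X) : Prop :=
  Set.InjOn φ Fg.verts ∧
  (∀ e, NRe Fg R e → Set.InjOn (ψ e) H.verts) ∧
  (∀ e, NRe Fg R e → ∀ x y : W, e = Sym2.mk x y →
      ({ψ e h₁, ψ e h₂} : Set X) = {φ x, φ y}) ∧
  (∀ e e', NRe Fg R e → NRe Fg R e' → e ≠ e' →
      Disjoint (ψ e '' (H.verts \ {h₁, h₂})) (ψ e' '' (H.verts \ {h₁, h₂}))) ∧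
  (∀ e, NRe Fg R e → Disjoint (ψ e '' (H.verts \ {h₁, h₂})) (φ '' Fg.verts)) ∧
  (P.verts = φ '' Fg.verts ∪ ⋃ e ∈ {e | NRe Fg R e}, ψ e '' H.verts) ∧
  (∀ x y, P.Adj x y ↔
    ((∃ p q, Fg.Adj p q ∧ p ∈ R ∧ q ∈ R ∧ x = φ p ∧ y = φ q) ∨
      ∃ e, NRe Fg R e ∧ ∃ p q, H.Adj p q ∧ x = ψ e p ∧ y = ψ e q))

/-- `P` is a copy of the product `(R,Fg) × (h₁h₂, H)` placed by `φ`. -/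
def IsProdCopy (Fg : Sub W) (R : Set W) (H : Sub U) (h₁ h₂ : U) (P : Sub X) (φ : W → X) : Prop :=
  ∃ ψ, IsProdCopyData Fg R H h₁ h₂ P φ ψ

/-- `InF F u v k G a b` : the graph `G` rooted at `(a, b)` is (a copy of) a member of
the family `𝓕ᵏ` built from the graph `F` with distinguished edge `{u,v}`.
`𝓕¹` consists of a single edge rooted at its endpoints, and for `k ≥ 2`,
`𝓕ᵏ = { ⊔_{1 ≤ i < k} (e,F)×(eᵢ,Fᵢ*) : Fᵢ* ∈ 𝓕^{≤i} }`, the parts being joined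
at the common roots and otherwise disjoint. -/
inductive InF (F : Sub ℕ) (u v : ℕ) : ℕ → Sub ℕ → ℕ → ℕ → Prop
  | base (a b : ℕ) (G : Sub ℕ) (hab : a ≠ b) (hv : G.verts = {a, b})
      (he : G.edgeSet = {Sym2.mk a b}) : InF F u v 1 G a b
  | step (k a b : ℕ) (P : ℕ → Sub ℕ) (G : Sub ℕ)
      (j : ℕ → ℕ) (Fi : ℕ → Sub ℕ) (c d : ℕ → ℕ) (φ : ℕ → ℕ → ℕ)
      (hk : 2 ≤ k)
      (hj : ∀ i, 1 ≤ i → i < k → 1 ≤ j i ∧ j i ≤ i)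
      (hrec : ∀ i, 1 ≤ i → i < k → InF F u v (j i) (Fi i) (c i) (d i))
      (hprod : ∀ i, 1 ≤ i → i < k →
        IsProdCopy F {u, v} (Fi i) (c i) (d i) (P i) (φ i) ∧
          ({φ i u, φ i v} : Set ℕ) = {a, b})
      (hdisj : ∀ i i', 1 ≤ i → i < k → 1 ≤ i' → i' < k → i ≠ i' →
        (P i).verts ∩ (P i').verts = {a, b})
      (hG : G = ⨆ i ∈ Set.Ico 1 k, P i) : InF F u v k G a b

/-- membership in `𝓕^{≤ m} = ∪_{1 ≤ j ≤ m} 𝓕ʲ`. -/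
def InFle (F : Sub ℕ) (u v : ℕ) (m : ℕ) (G : Sub ℕ) (a b : ℕ) : Prop :=
  ∃ j, 1 ≤ j ∧ j ≤ m ∧ InF F u v j G a b


/-! ### Partite graphs, regularity -/

/-- number of edges of a `SimpleGraph`. -/
def eCnt {V : Type*} (G : SimpleGraph V) : ℕ := G.edgeSet.ncard

/-- number of edges of `G` having all endpoints inside `R`, i.e. `e_{G[R]}`. -/
def eIn {V : Type*} (G : SimpleGraph V) (R : Finset V) : ℕ :=
  {e ∈ G.edgeSet | ∀ x ∈ e, x ∈ R}.ncard

/-- `F₋`: the graph `F` with all edges inside the root set `R` removed. -/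
def Fm {V : Type*} (F : SimpleGraph V) (R : Finset V) : SimpleGraph V :=
  F.deleteEdges {e | ∀ x ∈ e, x ∈ R}

/-- edge density of the bipartite pair `(s,t)` in `G`. -/
def bidensity {V : Type*} (G : SimpleGraph V) (s t : Finset V) : ℝ :=
  ({pq : V × V | pq.1 ∈ s ∧ pq.2 ∈ t ∧ G.Adj pq.1 pq.2}.ncard : ℝ) /
    ((s.card : ℝ) * (t.card : ℝ))

/-- the pair `(s,t)` is `(ε)`-regular in `G`: for all `s' ⊆ s`, `t' ⊆ t` with
`|s'| ≥ ε|s|`, `|t'| ≥ ε|t|` the density deviates by at most `ε` times the density of the pair. -/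
def EpsRegular {V : Type*} (G : SimpleGraph V) (ε : ℝ) (s t : Finset V) : Prop :=
  ∀ s' t' : Finset V, s' ⊆ s → t' ⊆ t → ε * s.card ≤ s'.card → ε * t.card ≤ t'.card →
    |bidensity G s' t' - bidensity G s t| ≤ ε * bidensity G s t

/-- the `i`-th vertex class `V_i` of the canonical `|ι|`-partite vertex set `ι × Fin n`. -/
def prt (ι : Type*) [Fintype ι] (n : ℕ) (i : ι) : Finset (ι × Fin n) :=
  Finset.univ.filter fun pq => pq.1 = i

variable {ι : Type*} [Fintype ι]

/-- `G` is partite w.r.t. `Fm`: its edges run only between vertex classes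
corresponding to edges of `Fm`. -/
def partiteOn (Fmg : SimpleGraph ι) (n : ℕ) (G : SimpleGraph (ι × Fin n)) : Prop :=
  ∀ x y, G.Adj x y → Fmg.Adj x.1 y.1

/-- number of edges of `G` between the classes `V_i` and `V_j`. -/
def ebp (n : ℕ) (G : SimpleGraph (ι × Fin n)) (i j : ι) : ℕ :=
  {pq : (ι × Fin n) × (ι × Fin n) | pq.1.1 = i ∧ pq.2.1 = j ∧ G.Adj pq.1 pq.2}.ncard

/-- `G ∈ 𝓖(Fmg, n, m, ε)`: `G` is `Fmg`-partite, with exactly `m` edges between classes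
joined by an edge of `Fmg`, all such pairs being `(ε)`-regular. -/
def inG (Fmg : SimpleGraph ι) (n m : ℕ) (ε : ℝ) (G : SimpleGraph (ι × Fin n)) : Prop :=
  partiteOn Fmg n G ∧
    ∀ i j, Fmg.Adj i j → ebp n G i j = m ∧ EpsRegular G ε (prt ι n i) (prt ι n j)

/-- `G_R` is `(F,q,ε)`-lower-regular. -/
def LowerReg (F : SimpleGraph ι) (R : Finset ι) (n : ℕ) (GR : Finset ((↥R) → Fin n))
    (q ε : ℝ) : Prop :=
  ∀ Wf : (↥R) → Finset (Fin n), (∀ i, ε * n ≤ ((Wf i).card : ℝ)) →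
    q ^ eIn F R * ∏ i, ((Wf i).card : ℝ) ≤ ((GR.filter fun e => ∀ i, e i ∈ Wf i).card : ℝ)

/-- `G_R` is `(F,q)`-upper-extensible. -/
def UpperExt (F : SimpleGraph ι) (R : Finset ι) (n : ℕ) (GR : Finset ((↥R) → Fin n))
    (q : ℝ) : Prop :=
  ∀ S : Finset ι, S ⊆ R → ∀ g : ι → Fin n,
    ((GR.filter fun e => ∀ i : ↥R, (i : ι) ∈ S → e i = g (i : ι)).card : ℝ) ≤
      q ^ (eIn F R - eIn F S) * (n : ℝ) ^ (R.card - S.card)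

/-- the number of edges, counted with multiplicity, of the multi-hypergraph `T(G, G_R)`:
for each `e ∈ G_R` the number of partite copies of `F₋` in `G` containing the vertices of `e`. -/
def Tcount (F : SimpleGraph ι) (R : Finset ι) (n : ℕ) (G : SimpleGraph (ι × Fin n))
    (GR : Finset ((↥R) → Fin n)) : ℕ :=
  ∑ e ∈ GR, {f : ι → Fin n |
      (∀ i j, (Fm F R).Adj i j → G.Adj (i, f i) (j, f j)) ∧
      ∀ i : ↥R, f (i : ι) = e i}.ncard

/-! ### The hypergraph 𝓔(G_R, F) and its co-degree function -/

/-- the edge set of the partite copy of `Fmg` given by the transversal `f`. -/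
def copyEdges (Fmg : SimpleGraph ι) {n : ℕ} (f : ι → Fin n) : Set (Sym2 (ι × Fin n)) :=
  Sym2.map (fun i => (i, f i)) '' Fmg.edgeSet

/-- the degree in `𝓔(G_R,F)` of a set `σ` of vertices (i.e. of edges of `K_{F₋,n}`):
the number of partite copies of `F₋` whose roots form an edge of `G_R` and whose
edge set contains `σ`. -/
def degI (F : SimpleGraph ι) (R : Finset ι) {n : ℕ} (GR : Finset ((↥R) → Fin n))
    (σ : Finset (Sym2 (ι × Fin n))) : ℕ :=
  {pf : ((↥R) → Fin n) × (ι → Fin n) |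
    pf.1 ∈ GR ∧ (∀ i : ↥R, pf.2 (i : ι) = pf.1 i) ∧ ↑σ ⊆ copyEdges (Fm F R) pf.2}.ncard

/-- `d^{(j)}(v)`: the maximal degree of a `j`-set containing `v`. -/
def djI (F : SimpleGraph ι) (R : Finset ι) {n : ℕ} (GR : Finset ((↥R) → Fin n))
    (jj : ℕ) (v : Sym2 (ι × Fin n)) : ℕ :=
  ⨆ σ : {σ : Finset (Sym2 (ι × Fin n)) // v ∈ σ ∧ σ.card = jj}, degI F R GR σ.1

/-- the co-degree function `δ(𝓔(G_R,F), τ)` of Saxton–Thomason. -/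
def codegFn (F : SimpleGraph ι) (R : Finset ι) {n : ℕ} (GR : Finset ((↥R) → Fin n))
    (τ : ℝ) : ℝ :=
  if (∑ v : Sym2 (ι × Fin n), degI F R GR {v}) = 0 then 0 else
    (2 : ℝ) ^ ((eCnt (Fm F R)).choose 2 - 1) *
      ∑ jj ∈ Finset.Icc 2 (eCnt (Fm F R)),
        ((∑ v : Sym2 (ι × Fin n), (djI F R GR jj v : ℝ)) /
            (τ ^ (jj - 1) * ∑ v : Sym2 (ι × Fin n), (degI F R GR {v} : ℝ))) *
          ((2 : ℝ) ^ ((jj - 1).choose 2))⁻¹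


/-! ### The online F-avoidance game -/

/-- the edges of the complete graph `K_n`. -/
abbrev En (n : ℕ) := {e : Sym2 (Fin n) // ¬ e.IsDiag}

/-- a (deterministic) Painter strategy: given the history of previously presented
edges together with their colors, and the newly presented edge, pick a color. -/
abbrev Strategy (n r : ℕ) := List (En n × Fin r) → En n → Fin r

/-- the history (presented edges with their colors, in order) after `N` rounds of
the game in which the edges arrive in the order `π` and Painter plays `σ`. -/
def histF {n r : ℕ} (σ : Strategy n r) (π : Fin (Nat.choose n 2) → En n) :
    ℕ → List (En n × Fin r)
  | 0 => []
  | i + 1 =>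
      histF σ π i ++
        if h : i < Nat.choose n 2 then
          [(π ⟨i, h⟩, σ (histF σ π i) (π ⟨i, h⟩))]
        else []

/-- the edge `e` occurs in the history `L` with color `c`. -/
def ListColored {n r : ℕ} (L : List (En n × Fin r)) (e : Sym2 (Fin n)) (c : Fin r) : Prop :=
  ∃ pr ∈ L, (pr.1 : Sym2 (Fin n)) = e ∧ pr.2 = c

/-- the graph of all edges of color `c` in the history `L`. -/
def colorGraphL {n r : ℕ} (L : List (En n × Fin r)) (c : Fin r) : SimpleGraph (Fin n) :=
  SimpleGraph.fromEdgeSet {e | ListColored L e c}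

/-- the graph of all presented edges in the history `L`. -/
def presentedGraphL {n r : ℕ} (L : List (En n × Fin r)) : SimpleGraph (Fin n) :=
  SimpleGraph.fromEdgeSet {e | ∃ c, ListColored L e c}

/-- the graph of edges colored `c` after `N` rounds. -/
def colorGraph {n r : ℕ} (σ : Strategy n r) (π : Fin (Nat.choose n 2) → En n) (N : ℕ)
    (c : Fin r) : SimpleGraph (Fin n) :=
  colorGraphL (histF σ π N) c

/-- the probability, under an edge ordering chosen uniformly at random among all
`(n choose 2)!` orderings of the edges of `K_n`, of the event `P`. -/
def gameProb (n : ℕ) (P : (Fin (Nat.choose n 2) → En n) → Prop) : ℝ :=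
  ({π : Fin (Nat.choose n 2) → En n | Function.Bijective π ∧ P π}.ncard : ℝ) /
    ({π : Fin (Nat.choose n 2) → En n | Function.Bijective π}.ncard : ℝ)

/-- some color class after `N` rounds contains a copy of the (finite) graph `F`. -/
def MonoCopy (F : Sub ℕ) {n r : ℕ} (σ : Strategy n r) (π : Fin (Nat.choose n 2) → En n)
    (N : ℕ) : Prop :=
  ∃ (c : Fin r) (φ : ℕ → Fin n), Set.InjOn φ F.verts ∧
    ∀ x y, F.Adj x y → (colorGraph σ π N c).Adj (φ x) (φ y)

/-- Painter survives `N` rounds: after `N` edges have been presented and colored,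
no color class contains a copy of `F`. -/
def Survive {α : Type*} (F : SimpleGraph α) {n r : ℕ} (σ : Strategy n r)
    (π : Fin (Nat.choose n 2) → En n) (N : ℕ) : Prop :=
  ∀ c : Fin r, ¬ ∃ φ : α ↪ Fin n, ∀ x y, F.Adj x y → (colorGraph σ π N c).Adj (φ x) (φ y)

/-! ### The binomial random graph -/

/-- probability of the event `P` for the binomial random graph `G(n,p)`. -/
def gnpProb (n : ℕ) (p : ℝ) (P : SimpleGraph (Fin n) → Prop) : ℝ :=
  ∑ G : SimpleGraph (Fin n),
    if P G then p ^ eCnt G * (1 - p) ^ (Nat.choose n 2 - eCnt G) else 0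

/-- the number of copies of the rooted graph `(ρ, G)` (with ordered roots `ρ`) spanned by
the tuple `f` in `Γ`: embeddings of `G - G[R]` carrying the roots `ρ` to `f` in order. -/
def spanCount {α : Type*} (G : SimpleGraph α) {k : ℕ} (ρ : Fin k ↪ α) {n : ℕ}
    (Γ : SimpleGraph (Fin n)) (f : Fin k ↪ Fin n) : ℕ :=
  {φ : α → Fin n | Function.Injective φ ∧ (∀ i, φ (ρ i) = f i) ∧
    ∀ x y, G.Adj x y → ¬(x ∈ Set.range ρ ∧ y ∈ Set.range ρ) → Γ.Adj (φ x) (φ y)}.ncard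

/-! ### F*-spanning subgraphs, upper uniformity -/

/-- `G` is an `F*`-spanning subgraph of `Γ` (where `F*` is rooted at `a, b`):
every edge of `G` is the root pair of a copy of `F*` in `Γ` whose non-root vertices
avoid `V(G)`, these copies being pairwise edge-disjoint. -/
def FStarSpanning {n : ℕ} (Fs : Sub ℕ) (a b : ℕ) (Γ : SimpleGraph (Fin n))
    (G : Sub (Fin n)) : Prop :=
  ∃ κ : Sym2 (Fin n) → ℕ → Fin n,
    (∀ e ∈ G.edgeSet, Set.InjOn (κ e) Fs.verts) ∧
    (∀ e ∈ G.edgeSet, ∀ x y : Fin n, e = Sym2.mk x y →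
      ({κ e a, κ e b} : Set (Fin n)) = {x, y}) ∧
    (∀ e ∈ G.edgeSet, ∀ w ∈ Fs.verts, w ≠ a → w ≠ b → κ e w ∉ G.verts) ∧
    (∀ e ∈ G.edgeSet, ∀ w w', Fs.Adj w w' → Γ.Adj (κ e w) (κ e w')) ∧
    (∀ e ∈ G.edgeSet, ∀ e' ∈ G.edgeSet, e ≠ e' →
      Disjoint (Sym2.map (κ e) '' Fs.edgeSet) (Sym2.map (κ e') '' Fs.edgeSet))

/-- number of edges of `G` from `s` to `t`. -/
def eBetween {V : Type*} (G : Sub V) (s t : Set V) : ℕ :=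
  {pq : V × V | pq.1 ∈ s ∧ pq.2 ∈ t ∧ G.Adj pq.1 pq.2}.ncard

/-- `G` is `(η,q)`-upper-uniform. -/
def UpperUniform {V : Type*} (G : Sub V) (η q : ℝ) : Prop :=
  ∀ s t : Set V, s ⊆ G.verts → t ⊆ G.verts → Disjoint s t →
    η * (nverts G : ℝ) ≤ (s.ncard : ℝ) → η * (nverts G : ℝ) ≤ (t.ncard : ℝ) →
    (eBetween G s t : ℝ) ≤ (1 + η) * q * (s.ncard : ℝ) * (t.ncard : ℝ)

/-! ### Dangerous copies -/

/-- `col` is a dangerous `r`-coloring of `F*₋` for `F* ∈ 𝓕ᵏ` (rooted at `a,b`):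
for some decomposition of `F*` as in the construction of `𝓕ᵏ`, the `k-1` copies of
`F₋` whose roots were identified in the construction are monochromatic, with pairwise
different colors. -/
def DangerousColoring (F : Sub ℕ) (u v : ℕ) (k : ℕ) (Fs : Sub ℕ) (a b : ℕ) (r : ℕ)
    (col : Sym2 ℕ → Fin r) : Prop :=
  k = 1 ∨ ∃ (P : ℕ → Sub ℕ) (c : ℕ → Fin r),
    Fs = (⨆ i ∈ Set.Ico 1 k, P i) ∧
    (∀ i ∈ Set.Ico 1 k, ∀ i' ∈ Set.Ico 1 k, i ≠ i' →
      c i ≠ c i' ∧ (P i).verts ∩ (P i').verts = {a, b}) ∧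
    ∀ i ∈ Set.Ico 1 k, ∃ (j : ℕ) (Fi : Sub ℕ) (c' d' : ℕ) (φ : ℕ → ℕ),
      1 ≤ j ∧ j ≤ i ∧ InF F u v j Fi c' d' ∧
      IsProdCopy F {u, v} Fi c' d' (P i) φ ∧ ({φ u, φ v} : Set ℕ) = {a, b} ∧
      ∀ x y, F.Adj x y → ¬(x ∈ ({u, v} : Set ℕ) ∧ y ∈ ({u, v} : Set ℕ)) →
        col (Sym2.mk (φ x) (φ y)) = c i

/-- `P` is a dangerous copy of `F × (e, F*₋)` in the colored graph after `N` rounds: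
a copy of the product of `F` (all edges of `F` being used) with `F*₋` rooted at `(a,b)`,
all of whose attached copies of `F*₋` are colored according to one and the same
dangerous coloring. -/
def IsDangerousCopy (F : Sub ℕ) (u v : ℕ) (r : ℕ) (Fs : Sub ℕ) (a b : ℕ) {n : ℕ}
    (σ : Strategy n r) (π : Fin (Nat.choose n 2) → En n) (N : ℕ) (P : Sub (Fin n)) : Prop :=
  ∃ (φ : ℕ → Fin n) (ψ : Sym2 ℕ → ℕ → Fin n) (col : Sym2 ℕ → Fin r),
    IsProdCopyData F ∅ (Fs.deleteEdges {Sym2.mk a b}) a b P φ ψ ∧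
    DangerousColoring F u v r Fs a b r col ∧
    ∀ e, NRe F ∅ e → ∀ x y, (Fs.deleteEdges {Sym2.mk a b}).Adj x y →
      ListColored (histF σ π N) (Sym2.mk (ψ e x) (ψ e y)) (col (Sym2.mk x y))

/-! ### The multi-phase game -/

/-- one phase of the multi-phase game: the edges of `K_n` are scanned in the order `π`;
those belonging to the phase graph `Gph` and not previously presented are presented to
Painter (playing `σ`), who colors them immediately. -/
def phaseStep {n r : ℕ} (σ : Strategy n r) (Gph : SimpleGraph (Fin n))
    (π : Fin (Nat.choose n 2) → En n) (init : List (En n × Fin r)) :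
    ℕ → List (En n × Fin r)
  | 0 => init
  | jj + 1 =>
      let L := phaseStep σ Gph π init jj
      if h : jj < Nat.choose n 2 then
        if (((π ⟨jj, h⟩ : En n) : Sym2 (Fin n)) ∈ Gph.edgeSet ∧
            ∀ pr ∈ L, pr.1 ≠ π ⟨jj, h⟩) then
          L ++ [(π ⟨jj, h⟩, σ L (π ⟨jj, h⟩))]
        else L
      else L

/-- the history after the first `i` phases of the multi-phase game with phase graphs `Gs`
and phase edge-orderings `πs`. -/
def multiHist {n r k : ℕ} (σ : Strategy n r) (Gs : Fin k → SimpleGraph (Fin n))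
    (πs : Fin k → Fin (Nat.choose n 2) → En n) : ℕ → List (En n × Fin r)
  | 0 => []
  | i + 1 =>
      if h : i < k then
        phaseStep σ (Gs ⟨i, h⟩) (πs ⟨i, h⟩) (multiHist σ Gs πs i) (Nat.choose n 2)
      else multiHist σ Gs πs i

/-- probability of the event `P` when `k` independent copies of `G(n,p)` are sampled,
each with an independent uniformly random ordering of the edges of `K_n`. -/
def phasesProb (n k : ℕ) (p : ℝ)
    (P : (Fin k → SimpleGraph (Fin n)) → (Fin k → Fin (Nat.choose n 2) → En n) → Prop) : ℝ :=
  (∑ Gs : Fin k → SimpleGraph (Fin n), ∑ πs : Fin k → Fin (Nat.choose n 2) → En n,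
      if (∀ i, Function.Bijective (πs i)) ∧ P Gs πs then
        ∏ i, p ^ eCnt (Gs i) * (1 - p) ^ (Nat.choose n 2 - eCnt (Gs i))
      else 0) /
    ({π : Fin (Nat.choose n 2) → En n | Function.Bijective π}.ncard : ℝ) ^ k

/-- witness data for Lemma `force regular`: a `t`-partite graph `G` with classes `parts`
of size `nn`, `m` edges between classes, monochromatic in color `col`, which is
`F*`-spanning for the member `(Fs, a, b)` of `𝓕^{≤|S|+1}`. -/
structure Wit (n r t : ℕ) where
  parts : Fin t → Finset (Fin n)
  G : Sub (Fin n)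
  col : Fin r
  nn : ℕ
  m : ℕ
  Fs : Sub ℕ
  a : ℕ
  b : ℕ

/-- validity of a witness for Lemma `force regular` (see `Wit`). -/
def WitValid (F : Sub ℕ) (u v : ℕ) {n r t k : ℕ} (S : Finset (Fin r)) (ε η pn : ℝ)
    (σ : Strategy n r) (Gs : Fin k → SimpleGraph (Fin n))
    (πs : Fin k → Fin (Nat.choose n 2) → En n) (w : Wit n r t) : Prop :=
  w.col ∉ S ∧
  (∃ jj : ℕ, 1 ≤ jj ∧ jj ≤ S.card + 1 ∧ InF F u v jj w.Fs w.a w.b) ∧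
  η * (n : ℝ) ≤ (w.nn : ℝ) ∧
  η * (n : ℝ) ^ nverts w.Fs * pn ^ nedges w.Fs ≤ (w.m : ℝ) ∧
  (∀ i, (w.parts i).card = w.nn) ∧
  (∀ i i', i ≠ i' → Disjoint (w.parts i) (w.parts i')) ∧
  (∀ x y, w.G.Adj x y → ∃ i i', i ≠ i' ∧ x ∈ w.parts i ∧ y ∈ w.parts i') ∧
  (∀ i i', i ≠ i' → eBetween w.G (↑(w.parts i)) (↑(w.parts i')) = w.m ∧
      EpsRegular w.G.spanningCoe ε (w.parts i) (w.parts i')) ∧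
  w.G.verts = ⋃ i, ↑(w.parts i) ∧
  (∀ x y, w.G.Adj x y → ListColored (multiHist σ Gs πs k) (Sym2.mk x y) w.col) ∧
  FStarSpanning w.Fs w.a w.b (presentedGraphL (multiHist σ Gs πs k)) w.G

/-- an equitable partition of `Fin n` into `rr` classes. -/
def Equitable {n rr : ℕ} (P : Fin n → Fin rr) : Prop :=
  ∀ x y : Fin rr, (P ⁻¹' {x}).ncard ≤ (P ⁻¹' {y}).ncard + 1

/-- edges of the simple graph `C` between `s` and `t`. -/
def eBetweenS {V : Type*} (C : SimpleGraph V) (s t : Set V) : ℕ :=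
  {pq : V × V | pq.1 ∈ s ∧ pq.2 ∈ t ∧ C.Adj pq.1 pq.2}.ncard

/-! The excess `ex(K) = e_K - 1 - d (v_K - 2)` of a finite graph `K` is modular: the
excesses of `A ⊔ B` and `A ⊓ B` add up to those of `A` and `B`; and `m₂(G) ≤ d` says that
every subgraph of `G` with an edge has nonpositive excess. Let `E = G ⊓ H` be the shared edge
(excess `0`) and `K ⊆ G ∪ H`. If `K` contains `E`, its excess is the sum of those of `K ∩ G`
and `K ∩ H`. If `K ∩ G` has no edges, `K` has no more edges than `K ∩ H` and at least as many
vertices. Otherwise modularity gives `2 ex(K) = ex(K ∩ G) + ex(K ∩ H) + ex(K ∪ E)`, and all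
three terms are nonpositive. Finally `d₂(G ∪ H) = d` because gluing along `E` preserves
excess `0`. -/

open SimpleGraph.Subgraph

section Counting

variable {W : Type*} {G H K : Sub W}

lemma finite_verts_of_le (hG : G.verts.Finite) (hK : K ≤ G) : K.verts.Finite :=
  hG.subset (verts_mono hK)

lemma finite_verts_sup (hG : G.verts.Finite) (hH : H.verts.Finite) : (G ⊔ H).verts.Finite :=
  hG.union hH

lemma finite_edgeSet_of_finite_verts (hG : G.verts.Finite) : G.edgeSet.Finite := by
  refine (Set.sym2_eq_mk_image (s := G.verts) ▸ (hG.prod hG).image _).subset ?_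
  rintro ⟨u, w⟩ he
  exact ⟨he.fst_mem, he.snd_mem⟩

lemma nverts_mono (hG : G.verts.Finite) (hK : K ≤ G) : nverts K ≤ nverts G :=
  Set.ncard_le_ncard (verts_mono hK) hG

lemma nedges_mono (hG : G.verts.Finite) (hK : K ≤ G) : nedges K ≤ nedges G :=
  Set.ncard_le_ncard (edgeSet_mono hK) (finite_edgeSet_of_finite_verts hG)

lemma one_le_nedges_of_adj (hG : G.verts.Finite) {x y : W} (h : G.Adj x y) : 1 ≤ nedges G :=
  (Set.ncard_pos (finite_edgeSet_of_finite_verts hG)).2 ⟨s(x, y), h⟩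

lemma two_le_nverts (hG : G.verts.Finite) (he : 1 ≤ nedges G) : 2 ≤ nverts G := by
  obtain ⟨⟨u, w⟩, huw⟩ := Set.nonempty_of_ncard_ne_zero (s := G.edgeSet)
    (by unfold nedges at he; omega)
  exact (Set.one_lt_ncard hG).2 ⟨u, huw.fst_mem, w, huw.snd_mem, huw.ne⟩

lemma nedges_le_one_of_nverts_eq_two (hv : nverts G = 2) : nedges G ≤ 1 := by
  obtain ⟨p, q, -, hpq⟩ := Set.ncard_eq_two.1 hv
  refine (Set.ncard_le_ncard (t := {s(p, q)}) ?_).trans (Set.ncard_singleton _).le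
  rintro ⟨u, w⟩ he
  have hu : u ∈ ({p, q} : Set W) := hpq ▸ he.fst_mem
  have hw : w ∈ ({p, q} : Set W) := hpq ▸ he.snd_mem
  have hne : u ≠ w := he.ne
  rcases hu with rfl | rfl <;> rcases hw with rfl | rfl <;> simp_all [Sym2.eq_swap]

lemma nverts_sup_add_nverts_inf (hG : G.verts.Finite) (hH : H.verts.Finite) :
    nverts (G ⊔ H) + nverts (G ⊓ H) = nverts G + nverts H := by
  simpa only [nverts, verts_sup, verts_inf] using Set.ncard_union_add_ncard_inter _ _ hG hH

lemma nedges_sup_add_nedges_inf (hG : G.verts.Finite) (hH : H.verts.Finite) :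
    nedges (G ⊔ H) + nedges (G ⊓ H) = nedges G + nedges H := by
  simpa only [nedges, edgeSet_sup, edgeSet_inf] using Set.ncard_union_add_ncard_inter _ _
    (finite_edgeSet_of_finite_verts hG) (finite_edgeSet_of_finite_verts hH)

lemma inf_sup_inf_of_le_sup (hK : K ≤ G ⊔ H) : K ⊓ G ⊔ K ⊓ H = K := by
  rw [← inf_sup_left, inf_eq_left.2 hK]

lemma nedges_le_nedges_inf_right (hG : G.verts.Finite) (hH : H.verts.Finite) (hK : K ≤ G ⊔ H)
    (hKG : nedges (K ⊓ G) = 0) : nedges K ≤ nedges (K ⊓ H) := by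
  have h := nedges_sup_add_nedges_inf (finite_verts_of_le hG (inf_le_right : K ⊓ G ≤ G))
    (finite_verts_of_le hH (inf_le_right : K ⊓ H ≤ H))
  rw [inf_sup_inf_of_le_sup hK, hKG] at h
  omega

end Counting

/-- `d₂` with its denominator cleared, which avoids the `0/0` case `v_K = 2`. -/
def excess {W : Type*} (d : ℝ) (K : Sub W) : ℝ :=
  (nedges K : ℝ) - 1 - d * ((nverts K : ℝ) - 2)

section Excess

variable {W : Type*} {G H K : Sub W} {d : ℝ}

lemma excess_sup_add_excess_inf (hG : G.verts.Finite) (hH : H.verts.Finite) :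
    excess d (G ⊔ H) + excess d (G ⊓ H) = excess d G + excess d H := by
  have hv : (nverts (G ⊔ H) : ℝ) + nverts (G ⊓ H) = nverts G + nverts H := by
    exact_mod_cast nverts_sup_add_nverts_inf hG hH
  have he : (nedges (G ⊔ H) : ℝ) + nedges (G ⊓ H) = nedges G + nedges H := by
    exact_mod_cast nedges_sup_add_nedges_inf hG hH
  simp only [excess]
  linear_combination he - d * hv

lemma excess_eq_zero (hv : nverts K = 2) (he : nedges K = 1) : excess d K = 0 := by
  simp [excess, hv, he]

lemma excess_le_excess_of_le (hd : 0 ≤ d) (hG : G.verts.Finite) (hK : K ≤ G)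
    (he : nedges G ≤ nedges K) : excess d G ≤ excess d K := by
  have hv : (nverts K : ℝ) ≤ nverts G := by exact_mod_cast nverts_mono hG hK
  have he' : (nedges G : ℝ) ≤ nedges K := by exact_mod_cast he
  have := mul_le_mul_of_nonneg_left (sub_le_sub_right hv 2) hd
  simp only [excess]
  linarith

lemma nverts_eq_two_and_nedges_eq_one_or_three_le (hK : K.verts.Finite) (he : 1 ≤ nedges K) :
    (nverts K = 2 ∧ nedges K = 1) ∨ 3 ≤ nverts K := by
  rcases (two_le_nverts hK he).eq_or_lt with hv | hv
  · exact Or.inl ⟨hv.symm, (nedges_le_one_of_nverts_eq_two hv.symm).antisymm he⟩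
  · exact Or.inr hv

lemma d2_eq_zero_of_nverts_eq_two (hv : nverts K = 2) : d2 K = 0 := by
  simp [d2, hv]

lemma excess_nonpos_iff_d2_le (hd : 0 ≤ d) (hK : K.verts.Finite) (he : 1 ≤ nedges K) :
    excess d K ≤ 0 ↔ d2 K ≤ d := by
  rcases nverts_eq_two_and_nedges_eq_one_or_three_le hK he with ⟨hv, he⟩ | hv
  · simp [excess_eq_zero hv he, d2_eq_zero_of_nverts_eq_two hv, hd]
  · have hpos : (0 : ℝ) < nverts K - 2 := by
      have : (3 : ℝ) ≤ nverts K := by exact_mod_cast hv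
      linarith
    rw [d2, div_le_iff₀ hpos, excess]
    constructor <;> intro h <;> linarith

lemma excess_d2_self (hK : K.verts.Finite) (he : 1 ≤ nedges K) : excess (d2 K) K = 0 := by
  rcases nverts_eq_two_and_nedges_eq_one_or_three_le hK he with ⟨hv, he⟩ | hv
  · exact excess_eq_zero hv he
  · have hpos : (nverts K : ℝ) - 2 ≠ 0 := by
      have : (3 : ℝ) ≤ nverts K := by exact_mod_cast hv
      linarith
    rw [excess, d2, div_mul_cancel₀ _ hpos, sub_self]

lemma d2_eq_of_excess_eq_zero (hv : nverts K ≠ 2) (h : excess d K = 0) : d2 K = d := by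
  have hpos : (nverts K : ℝ) - 2 ≠ 0 := by
    rw [sub_ne_zero]
    exact_mod_cast hv
  rw [d2, div_eq_iff hpos]
  rw [excess] at h
  linarith

lemma d2_nonneg (hK : K.verts.Finite) (he : 1 ≤ nedges K) : 0 ≤ d2 K := by
  have hv : (2 : ℝ) ≤ nverts K := by exact_mod_cast two_le_nverts hK he
  have he' : (1 : ℝ) ≤ nedges K := by exact_mod_cast he
  exact div_nonneg (by linarith) (by linarith)

lemma d2_le_nedges (hK : K.verts.Finite) (he : 1 ≤ nedges K) : d2 K ≤ nedges K := by
  rcases nverts_eq_two_and_nedges_eq_one_or_three_le hK he with ⟨hv, -⟩ | hv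
  · rw [d2_eq_zero_of_nverts_eq_two hv]
    positivity
  · have hv' : (1 : ℝ) ≤ nverts K - 2 := by
      have : (3 : ℝ) ≤ nverts K := by exact_mod_cast hv
      linarith
    have he' : (1 : ℝ) ≤ nedges K := by exact_mod_cast he
    exact (div_le_self (by linarith) hv').trans (by linarith)

lemma d2_le_m2D (hG : G.verts.Finite) (hK : K ≤ G) (he : 1 ≤ nedges K) : d2 K ≤ m2D G := by
  refine le_ciSup (f := fun K : {K : Sub W // K ≤ G ∧ 1 ≤ nedges K} ↦ d2 K.1)
    ⟨nedges G, ?_⟩ ⟨K, hK, he⟩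
  rintro _ ⟨⟨K', hK', he'⟩, rfl⟩
  exact (d2_le_nedges (finite_verts_of_le hG hK') he').trans
    (by exact_mod_cast nedges_mono hG hK')

lemma m2D_le_iff (hd : 0 ≤ d) (hG : G.verts.Finite) :
    m2D G ≤ d ↔ ∀ K ≤ G, 1 ≤ nedges K → excess d K ≤ 0 := by
  constructor
  · intro h K hK he
    rw [excess_nonpos_iff_d2_le hd (finite_verts_of_le hG hK) he]
    exact (d2_le_m2D hG hK he).trans h
  · intro h
    refine Real.iSup_le (fun ⟨K, hK, he⟩ ↦ ?_) hd
    exact (excess_nonpos_iff_d2_le hd (finite_verts_of_le hG hK) he).1 (h K hK he)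

end Excess

section Gluing

variable {W : Type*} {G H K : Sub W} {d : ℝ}

lemma excess_inf_add_excess_inf (hG : G.verts.Finite) (hH : H.verts.Finite) (hK : K ≤ G ⊔ H) :
    excess d (K ⊓ G) + excess d (K ⊓ H) = excess d K + excess d (K ⊓ (G ⊓ H)) := by
  have h := excess_sup_add_excess_inf (d := d)
    (finite_verts_of_le hG (inf_le_right : K ⊓ G ≤ G))
    (finite_verts_of_le hH (inf_le_right : K ⊓ H ≤ H))
  rwa [inf_sup_inf_of_le_sup hK, ← inf_inf_distrib_left, eq_comm] at h

lemma excess_nonpos_of_inf_le (hG : G.verts.Finite) (hH : H.verts.Finite)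
    (hv : nverts (G ⊓ H) = 2) (he : nedges (G ⊓ H) = 1)
    (hGd : ∀ K ≤ G, 1 ≤ nedges K → excess d K ≤ 0)
    (hHd : ∀ K ≤ H, 1 ≤ nedges K → excess d K ≤ 0)
    (hK : K ≤ G ⊔ H) (hEK : G ⊓ H ≤ K) : excess d K ≤ 0 := by
  have hsplit := excess_inf_add_excess_inf (d := d) hG hH hK
  rw [inf_eq_right.2 hEK, excess_eq_zero hv he] at hsplit
  have hKG := hGd _ inf_le_right <| he ▸
    nedges_mono (finite_verts_of_le hG inf_le_right) (le_inf hEK inf_le_left)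
  have hKH := hHd _ inf_le_right <| he ▸
    nedges_mono (finite_verts_of_le hH inf_le_right) (le_inf hEK inf_le_right)
  linarith

lemma excess_nonpos_of_le_sup (hd : 0 ≤ d) (hG : G.verts.Finite) (hH : H.verts.Finite)
    (hv : nverts (G ⊓ H) = 2) (he : nedges (G ⊓ H) = 1)
    (hGd : ∀ K ≤ G, 1 ≤ nedges K → excess d K ≤ 0)
    (hHd : ∀ K ≤ H, 1 ≤ nedges K → excess d K ≤ 0)
    (hK : K ≤ G ⊔ H) (hKe : 1 ≤ nedges K) : excess d K ≤ 0 := by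
  have hKfin : K.verts.Finite := finite_verts_of_le (finite_verts_sup hG hH) hK
  by_cases hKG : nedges (K ⊓ G) = 0
  · have h := nedges_le_nedges_inf_right hG hH hK hKG
    exact (excess_le_excess_of_le hd hKfin inf_le_left h).trans
      (hHd _ inf_le_right (hKe.trans h))
  by_cases hKH : nedges (K ⊓ H) = 0
  · have h := nedges_le_nedges_inf_right hH hG (sup_comm G H ▸ hK) hKH
    exact (excess_le_excess_of_le hd hKfin inf_le_left h).trans
      (hGd _ inf_le_right (hKe.trans h))
  have hsplit := excess_inf_add_excess_inf (d := d) hG hH hK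
  have hglue := excess_sup_add_excess_inf (d := d) (H := G ⊓ H) hKfin
    (finite_verts_of_le hG inf_le_left)
  rw [excess_eq_zero hv he] at hglue
  have hKE := excess_nonpos_of_inf_le hG hH hv he hGd hHd
    (sup_le hK (inf_le_left.trans le_sup_left)) le_sup_right
  have hKG' := hGd _ inf_le_right (Nat.one_le_iff_ne_zero.2 hKG)
  have hKH' := hHd _ inf_le_right (Nat.one_le_iff_ne_zero.2 hKH)
  linarith

lemma m2D_sup_le (hd : 0 ≤ d) (hG : G.verts.Finite) (hH : H.verts.Finite)
    (hv : nverts (G ⊓ H) = 2) (he : nedges (G ⊓ H) = 1)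
    (hGd : m2D G ≤ d) (hHd : m2D H ≤ d) : m2D (G ⊔ H) ≤ d := by
  rw [m2D_le_iff hd hG] at hGd
  rw [m2D_le_iff hd hH] at hHd
  exact (m2D_le_iff hd (finite_verts_sup hG hH)).2 fun K hK hKe ↦
    excess_nonpos_of_le_sup hd hG hH hv he hGd hHd hK hKe

lemma d2_sup_eq (hG : G.verts.Finite) (hH : H.verts.Finite)
    (hv : nverts (G ⊓ H) = 2) (he : nedges (G ⊓ H) = 1) (hGd : d2 G = d) (hHd : d2 H = d) :
    d2 (G ⊔ H) = d := by
  have hGe : 1 ≤ nedges G := he ▸ nedges_mono hG inf_le_left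
  have hHe : 1 ≤ nedges H := he ▸ nedges_mono hH inf_le_right
  have hG0 : excess d G = 0 := hGd ▸ excess_d2_self hG hGe
  have hH0 : excess d H = 0 := hHd ▸ excess_d2_self hH hHe
  have hsum := excess_sup_add_excess_inf (d := d) hG hH
  rw [excess_eq_zero hv he, hG0, hH0] at hsum
  by_cases hU : nverts (G ⊔ H) = 2
  · have hGv : nverts G = 2 := by
      have := nverts_mono (finite_verts_sup hG hH) (le_sup_left : G ≤ G ⊔ H)
      have := two_le_nverts hG hGe
      omega
    rw [d2_eq_zero_of_nverts_eq_two hU, ← hGd, d2_eq_zero_of_nverts_eq_two hGv]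
  · exact d2_eq_of_excess_eq_zero hU (by linarith)

end Gluing

theorem stmt12 {W : Type} (G H : Sub W) (hGfin : G.verts.Finite) (hHfin : H.verts.Finite)
    (hG : TwoBalanced G) (hH : TwoBalanced H)
    (hmeet : ∃ x y : W, x ≠ y ∧ G.verts ∩ H.verts = {x, y} ∧ G.Adj x y ∧ H.Adj x y)
    (d : ℝ) (hdG : m2D G = d) (hdH : m2D H = d) :
    TwoBalanced (G ⊔ H) ∧ m2D (G ⊔ H) = d := by
  obtain ⟨x, y, hxy, hverts, hGxy, hHxy⟩ := hmeet
  have hv : nverts (G ⊓ H) = 2 := by rw [nverts, verts_inf, hverts, Set.ncard_pair hxy]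
  have he : nedges (G ⊓ H) = 1 := (nedges_le_one_of_nverts_eq_two hv).antisymm <|
    one_le_nedges_of_adj (finite_verts_of_le hGfin inf_le_left)
      (show (G ⊓ H).Adj x y from ⟨hGxy, hHxy⟩)
  have hGe : 1 ≤ nedges G := he ▸ nedges_mono hGfin inf_le_left
  have hd : 0 ≤ d := hdG ▸ hG ▸ d2_nonneg hGfin hGe
  have hd2 : d2 (G ⊔ H) = d :=
    d2_sup_eq hGfin hHfin hv he (hG.symm.trans hdG) (hH.symm.trans hdH)
  have hm : m2D (G ⊔ H) = d := by
    refine (m2D_sup_le hd hGfin hHfin hv he hdG.le hdH.le).antisymm ?_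
    have hUfin := finite_verts_sup hGfin hHfin
    exact hd2 ▸ d2_le_m2D hUfin le_rfl (hGe.trans (nedges_mono hUfin le_sup_left))
  exact ⟨hm.trans hd2.symm, hm⟩

end OG
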